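/- Let (x_n)_{n≥1} be a sequence in [0,1) and suppose that for every s > 0, lim_{N→∞} (1/N)·#{(m,n) : 1 ≤ m ≠ n ≤ N, ‖x_m − x_n‖ ≤ s/N} = 2s, where ‖·‖ denotes the distance to the nearest integer. Then (x_n) is uniformly distributed in [0,1), i.e. for all 0 ≤ a < b ≤ 1, lim_{N→∞} (1/N)·#{1 ≤ n ≤ N : a ≤ x_n < b} = b − a. -/

import Mathlib

open Filter

/-- Distance from a real number to the nearest integer. -/
noncomputable def nint (x : ℝ) : ℝ := |x - round x|

/-!
Cover `[0, 1)` by the windows `[i/N, (i+s)/N)`, `i ∈ ℤ`, and let `w i` count the `x n`, `n ≤ N`, in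
window `i`. Every point lies in exactly `s` windows, so `∑ w i = s N`, while `∑ (w i)²` counts the
pairs `(m, n)` with weight `(s - |⌊N x m⌋ - ⌊N x n⌋|)₊`, at most the number of `t ∈ [1, s]` with
`‖x m - x n‖ ≤ t / N`. Poissonian pair correlation therefore gives `∑ (w i)² ≤ (s² + O(s)) N`, i.e.
`∑ (w i - s)² = O(s N + s³)`, and by Cauchy–Schwarz `∑ |w i - s| = O(√s N)`. Counting the windows
that fit inside `[c, d)` yields `#{n ≤ N | x n ∈ [c, d)} ≥ (d - c - O(1/√s)) N` for large `N`;
applied to `[a, b)` and to the two pieces of its complement this gives the limit.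
-/

open Finset

section Windows

variable {ι : Type*} (S : Finset ι) (k : ι → ℤ) (s : ℕ)

def windowCount (i : ℤ) : ℕ := #{n ∈ S | i ≤ k n ∧ k n < i + s}

lemma card_filter_window_le (I : Finset ℤ) (m : ℤ) : #{i ∈ I | i ≤ m ∧ m < i + s} ≤ s := by
  calc #{i ∈ I | i ≤ m ∧ m < i + s} ≤ #(Ioc (m - s) m) :=
        card_le_card fun i hi => by simp only [mem_filter, mem_Ioc] at hi ⊢; omega
    _ = s := by simp

lemma card_filter_window_eq {I : Finset ℤ} {m : ℤ} (h : Ioc (m - s) m ⊆ I) :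
    #{i ∈ I | i ≤ m ∧ m < i + s} = s := by
  have : {i ∈ I | i ≤ m ∧ m < i + s} = Ioc (m - s) m := by
    ext i
    constructor
    · intro hi; simp only [mem_filter, mem_Ioc] at hi ⊢; omega
    · intro hi; exact mem_filter.2 ⟨h hi, by simp only [mem_Ioc] at hi; omega⟩
  simp [this]

lemma sum_windowCount (I : Finset ℤ) :
    ∑ i ∈ I, windowCount S k s i = ∑ n ∈ S, #{i ∈ I | i ≤ k n ∧ k n < i + s} :=
  sum_card_bipartiteAbove_eq_sum_card_bipartiteBelow _

lemma sum_windowCount_eq {I : Finset ℤ} (h : ∀ n ∈ S, Ioc (k n - s) (k n) ⊆ I) :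
    ∑ i ∈ I, windowCount S k s i = s * #S := by
  rw [sum_windowCount, sum_congr rfl fun n hn => card_filter_window_eq s (h n hn),
    sum_const, smul_eq_mul, mul_comm]

lemma sum_windowCount_le (I : Finset ℤ) (P : ι → Prop) [DecidablePred P]
    (h : ∀ n ∈ S, ∀ i ∈ I, i ≤ k n → k n < i + s → P n) :
    ∑ i ∈ I, windowCount S k s i ≤ s * #{n ∈ S | P n} := by
  have hS : ∀ i ∈ I, windowCount S k s i = windowCount {n ∈ S | P n} k s i := fun i hi => by
    unfold windowCount
    rw [filter_filter]
    exact congrArg card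
      (filter_congr fun n hn => ⟨fun hw => ⟨h n hn i hi hw.1 hw.2, hw⟩, And.right⟩)
  rw [sum_congr rfl hS, sum_windowCount]
  calc _ ≤ ∑ n ∈ {n ∈ S | P n}, s := sum_le_sum fun n _ => card_filter_window_le s I (k n)
    _ = s * #{n ∈ S | P n} := by rw [sum_const, smul_eq_mul, mul_comm]

lemma card_filter_window_pair_le (I : Finset ℤ) (m m' : ℤ) :
    #{i ∈ I | (i ≤ m ∧ m < i + s) ∧ (i ≤ m' ∧ m' < i + s)} ≤
      #{t ∈ Icc 1 s | |m - m'| < ((t : ℕ) : ℤ)} := by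
  refine card_le_card_of_injOn (fun i => (max m m' - i + 1).toNat) (fun i hi => ?_) ?_
  · simp only [coe_filter, Set.mem_ofPred_eq, mem_Icc, abs_sub_lt_iff] at hi ⊢
    omega
  · intro i hi j hj hij
    simp only [coe_filter, Set.mem_ofPred_eq] at hi hj hij
    omega

lemma sum_sq_windowCount_le (I : Finset ℤ) :
    ∑ i ∈ I, windowCount S k s i ^ 2 ≤ ∑ t ∈ Icc 1 s, #{p ∈ S ×ˢ S | |k p.1 - k p.2| < t} := by
  have hsq : ∀ i, windowCount S k s i ^ 2 =
      #{p ∈ S ×ˢ S | (i ≤ k p.1 ∧ k p.1 < i + s) ∧ (i ≤ k p.2 ∧ k p.2 < i + s)} := fun i => by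
    rw [sq, windowCount, ← card_product, ← filter_product]
  simp only [hsq]
  calc _ = ∑ p ∈ S ×ˢ S, #{i ∈ I | (i ≤ k p.1 ∧ k p.1 < i + s) ∧ (i ≤ k p.2 ∧ k p.2 < i + s)} :=
        sum_card_bipartiteAbove_eq_sum_card_bipartiteBelow _
    _ ≤ ∑ p ∈ S ×ˢ S, #{t ∈ Icc 1 s | |k p.1 - k p.2| < ((t : ℕ) : ℤ)} :=
        sum_le_sum fun p _ => card_filter_window_pair_le s I (k p.1) (k p.2)
    _ = _ := sum_card_bipartiteAbove_eq_sum_card_bipartiteBelow _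

end Windows

lemma nint_le_abs (y : ℝ) : nint y ≤ |y| := by
  simpa [nint] using round_le y 0

lemma abs_sub_lt_of_abs_floor_sub_lt {u v : ℝ} {t : ℤ} (h : |⌊u⌋ - ⌊v⌋| < t) : |u - v| < t := by
  have hsplit : u - v = ((⌊u⌋ - ⌊v⌋ : ℤ) : ℝ) + (Int.fract u - Int.fract v) := by
    rw [Int.fract, Int.fract]; push_cast; ring
  have hfract : |Int.fract u - Int.fract v| < 1 := by
    rw [abs_sub_lt_iff]
    constructor <;> linarith [Int.fract_nonneg u, Int.fract_nonneg v, Int.fract_lt_one u,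
      Int.fract_lt_one v]
  have hD : ((|⌊u⌋ - ⌊v⌋| : ℤ) : ℝ) + 1 ≤ t := by exact_mod_cast h
  calc |u - v| ≤ |((⌊u⌋ - ⌊v⌋ : ℤ) : ℝ)| + |Int.fract u - Int.fract v| := hsplit ▸ abs_add_le _ _
    _ < t := by push_cast at hD ⊢; linarith

lemma nint_sub_le_of_abs_floor_sub_lt {N t : ℕ} (hN : 0 < N) {y z : ℝ}
    (h : |⌊(N : ℝ) * y⌋ - ⌊(N : ℝ) * z⌋| < t) : nint (y - z) ≤ t / N := by
  have hNR : (0 : ℝ) < N := by exact_mod_cast hN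
  rw [le_div_iff₀ hNR]
  calc nint (y - z) * N ≤ |y - z| * N := by gcongr; exact nint_le_abs _
    _ = |(N : ℝ) * y - N * z| := by rw [← mul_sub, abs_mul, abs_of_pos hNR, mul_comm]
    _ ≤ t := (abs_sub_lt_of_abs_floor_sub_lt (t := t) h).le

lemma sum_Icc_two_mul (s : ℕ) : ∑ t ∈ Icc 1 s, (2 * t : ℝ) = s * (s + 1) := by
  induction s with
  | zero => simp
  | succ s ih => rw [sum_Icc_succ_top (by omega), ih]; push_cast; ring

section Sequence

variable (x : ℕ → ℝ)

noncomputable def pairCount (N : ℕ) (r : ℝ) : ℕ :=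
  #{p ∈ Icc 1 N ×ˢ Icc 1 N | p.1 ≠ p.2 ∧ nint (x p.1 - x p.2) ≤ r / N}

noncomputable def countIn (N : ℕ) (c d : ℝ) : ℕ := #{n ∈ Icc 1 N | c ≤ x n ∧ x n < d}

def HasPoissonPairCorrelation : Prop :=
  ∀ r : ℝ, 0 < r → Tendsto (fun N : ℕ => (pairCount x N r : ℝ) / N) atTop (nhds (2 * r))

-- `⌊N y⌋ ∈ [i, i + s)` iff `y ∈ [i / N, (i + s) / N)`; the windows meeting `[0, 1)` are those
-- with `1 - s ≤ i < N`.
noncomputable def windowDiscrepancy (N s : ℕ) : ℝ :=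
  ∑ i ∈ Ico (1 - s : ℤ) N, |(windowCount (Icc 1 N) (fun n => ⌊(N : ℝ) * x n⌋) s i : ℝ) - s|

variable {x}

lemma card_abs_floor_sub_lt_le {N : ℕ} (hN : 0 < N) (t : ℕ) :
    #{p ∈ Icc 1 N ×ˢ Icc 1 N | |⌊(N : ℝ) * x p.1⌋ - ⌊(N : ℝ) * x p.2⌋| < t} ≤
      N + pairCount x N t := by
  rw [← card_filter_add_card_filter_not (fun p : ℕ × ℕ => p.1 = p.2), filter_filter,
    filter_filter]
  gcongr
  · calc _ ≤ #(Icc 1 N).diag := card_le_card fun p hp => by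
          simp only [mem_filter, mem_diag, mem_product] at hp ⊢; exact ⟨hp.1.1, hp.2.2⟩
      _ = N := by simp
  · exact card_le_card fun p hp => by
      simp only [mem_filter] at hp ⊢
      exact ⟨hp.1, hp.2.2, nint_sub_le_of_abs_floor_sub_lt hN hp.2.1⟩

lemma countIn_add_countIn (N : ℕ) {c d e : ℝ} (hcd : c ≤ d) (hde : d ≤ e) :
    countIn x N c d + countIn x N d e = countIn x N c e := by
  unfold countIn
  rw [← card_filter_add_card_filter_not (s := {n ∈ Icc 1 N | c ≤ x n ∧ x n < e})
    (fun n => x n < d), filter_filter, filter_filter]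
  congr 2 <;> apply filter_congr <;> intro n _ <;> grind

lemma countIn_zero_one (hx : ∀ n, x n ∈ Set.Ico (0 : ℝ) 1) (N : ℕ) : countIn x N 0 1 = N := by
  rw [countIn, filter_true_of_mem fun n _ => Set.mem_Ico.1 (hx n), Nat.card_Icc,
    add_tsub_cancel_right]

lemma floor_mul_mem_Ico (hx : ∀ n, x n ∈ Set.Ico (0 : ℝ) 1) {N : ℕ} (hN : 0 < N) (n : ℕ) :
    0 ≤ ⌊(N : ℝ) * x n⌋ ∧ ⌊(N : ℝ) * x n⌋ < N := by
  have hNR : (0 : ℝ) < N := by exact_mod_cast hN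
  obtain ⟨h0, h1⟩ := hx n
  refine ⟨Int.floor_nonneg.2 (by positivity), Int.floor_lt.2 ?_⟩
  push_cast
  nlinarith

lemma windowDiscrepancy_sq_le (hx : ∀ n, x n ∈ Set.Ico (0 : ℝ) 1) {N : ℕ} (hN : 0 < N) (s : ℕ) :
    windowDiscrepancy x N s ^ 2 ≤
      (N + s - 1) * (s * N + ∑ t ∈ Icc 1 s, (pairCount x N t : ℝ) - s ^ 2 * N
        + s ^ 2 * (s - 1)) := by
  set k : ℕ → ℤ := fun n => ⌊(N : ℝ) * x n⌋
  set I := Ico (1 - s : ℤ) N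
  set w : ℤ → ℝ := fun i => windowCount (Icc 1 N) k s i
  have hsum : ∑ i ∈ I, w i = s * N := by
    have := sum_windowCount_eq (Icc 1 N) k s (I := I) fun n _ i hi => by
      have : 0 ≤ k n ∧ k n < N := floor_mul_mem_Ico hx hN n
      simp only [mem_Ioc, I, mem_Ico] at hi ⊢
      omega
    simp only [w, ← Nat.cast_sum, this, Nat.card_Icc, add_tsub_cancel_right, Nat.cast_mul]
  have hsq : ∑ i ∈ I, w i ^ 2 ≤ s * N + ∑ t ∈ Icc 1 s, (pairCount x N t : ℝ) := by
    have := (sum_sq_windowCount_le (Icc 1 N) k s I).trans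
      (sum_le_sum fun t _ => card_abs_floor_sub_lt_le hN t)
    rw [sum_add_distrib, sum_const, Nat.card_Icc, add_tsub_cancel_right, smul_eq_mul] at this
    simp only [w]
    exact_mod_cast this
  have hI : (#I : ℝ) = N + s - 1 := by
    simp only [I, Int.card_Ico]
    rw [show (N : ℤ) - (1 - s) = ((N + s - 1 : ℕ) : ℤ) by omega, Int.toNat_natCast,
      Nat.cast_sub (by omega), Nat.cast_add, Nat.cast_one]
  have hvar : ∑ i ∈ I, (w i - s) ^ 2 = ∑ i ∈ I, w i ^ 2 - 2 * s * ∑ i ∈ I, w i + #I * s ^ 2 := by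
    simp only [sub_sq, sum_add_distrib, sum_sub_distrib, sum_const, nsmul_eq_mul, ← sum_mul,
      ← mul_sum]
    ring
  calc windowDiscrepancy x N s ^ 2 ≤ #I * ∑ i ∈ I, |w i - s| ^ 2 := sq_sum_le_card_mul_sum_sq
    _ = (N + s - 1) * (∑ i ∈ I, w i ^ 2 - 2 * s * ∑ i ∈ I, w i + #I * s ^ 2) := by
        simp only [sq_abs, hvar, hI]
    _ ≤ _ := by
        have hN1 : (1 : ℝ) ≤ N := by exact_mod_cast hN
        have hs0 : (0 : ℝ) ≤ s := s.cast_nonneg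
        rw [hsum, hI]
        exact mul_le_mul_of_nonneg_left (by linarith) (by linarith)

lemma le_countIn_add_windowDiscrepancy {N s : ℕ} (hN : 0 < N) (hs : 0 < s) {c d : ℝ}
    (hc : 0 ≤ c) (hd : d ≤ 1) :
    s * ((d - c) * N - s - 1) ≤ s * countIn x N c d + windowDiscrepancy x N s := by
  have hNR : (0 : ℝ) < N := by exact_mod_cast hN
  set k : ℕ → ℤ := fun n => ⌊(N : ℝ) * x n⌋
  set w : ℤ → ℝ := fun i => windowCount (Icc 1 N) k s i
  set J := Ico ⌈(N : ℝ) * c⌉ (⌊(N : ℝ) * d⌋ - s + 1)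
  have hceil : 0 ≤ ⌈(N : ℝ) * c⌉ := Int.ceil_nonneg (by positivity)
  have hfloor : ⌊(N : ℝ) * d⌋ ≤ N := Int.floor_le_iff.2 (by push_cast; nlinarith)
  have hJI : J ⊆ Ico (1 - s : ℤ) N := fun i hi => by
    simp only [J, mem_Ico] at hi ⊢
    omega
  have hJ : (d - c) * N - s - 1 ≤ #J := by
    have h1 := Int.sub_one_lt_floor ((N : ℝ) * d)
    have h2 := Int.ceil_lt_add_one ((N : ℝ) * c)
    have h3 : ((⌊(N : ℝ) * d⌋ - s + 1 - ⌈(N : ℝ) * c⌉ : ℤ) : ℝ) ≤ #J := by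
      rw [Int.card_Ico]; exact_mod_cast Int.self_le_toNat _
    push_cast at h3
    linarith
  have hfit : ∀ n ∈ Icc 1 N, ∀ i ∈ J, i ≤ k n → k n < i + s → c ≤ x n ∧ x n < d := by
    intro n _ i hi hlo hhi
    simp only [J, mem_Ico] at hi
    have hcx : (N : ℝ) * c ≤ N * x n :=
      (Int.ceil_le.1 hi.1).trans (Int.le_floor.1 hlo)
    have hxd : (N : ℝ) * x n < N * d :=
      lt_of_not_ge fun h => by have : ⌊(N : ℝ) * d⌋ ≤ k n := Int.floor_le_floor h; omega
    exact ⟨le_of_mul_le_mul_left hcx hNR, lt_of_mul_lt_mul_left hxd hNR.le⟩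
  have hcount : ∑ i ∈ J, w i ≤ s * countIn x N c d := by
    simp only [w, countIn]
    exact_mod_cast sum_windowCount_le (Icc 1 N) k s J _ hfit
  calc s * ((d - c) * N - s - 1) ≤ ∑ _i ∈ J, (s : ℝ) := by
        rw [sum_const, nsmul_eq_mul, mul_comm]; gcongr
    _ ≤ ∑ i ∈ J, (w i + |w i - s|) := sum_le_sum fun i _ => by linarith [neg_abs_le (w i - s)]
    _ ≤ s * countIn x N c d + windowDiscrepancy x N s := by
        rw [sum_add_distrib]
        exact add_le_add hcount (sum_le_sum_of_subset_of_nonneg hJI fun _ _ _ => abs_nonneg _)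

lemma HasPoissonPairCorrelation.eventually_sum_pairCount_le (hppc : HasPoissonPairCorrelation x)
    {s : ℕ} (hs : 0 < s) :
    ∀ᶠ N : ℕ in atTop, ∑ t ∈ Icc 1 s, (pairCount x N t : ℝ) ≤ (s ^ 2 + 2 * s) * N := by
  have hlim : Tendsto (fun N : ℕ => ∑ t ∈ Icc 1 s, (pairCount x N t : ℝ) / N) atTop
      (nhds (∑ t ∈ Icc 1 s, (2 * t : ℝ))) :=
    tendsto_finsetSum _ fun t ht => hppc t (by have := (mem_Icc.1 ht).1; positivity)
  rw [sum_Icc_two_mul] at hlim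
  have hslack : (s : ℝ) * (s + 1) < s ^ 2 + 2 * s := by
    have : (0 : ℝ) < s := by exact_mod_cast hs
    nlinarith
  filter_upwards [hlim.eventually_lt_const hslack, eventually_gt_atTop 0] with N hN hN0
  rw [← sum_div, div_lt_iff₀ (by exact_mod_cast hN0)] at hN
  exact hN.le

lemma HasPoissonPairCorrelation.eventually_sub_le_countIn_div
    (hx : ∀ n, x n ∈ Set.Ico (0 : ℝ) 1) (hppc : HasPoissonPairCorrelation x) {c d : ℝ}
    (hc : 0 ≤ c) (hd : d ≤ 1) {ε : ℝ} (hε : 0 < ε) :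
    ∀ᶠ N : ℕ in atTop, d - c - ε ≤ countIn x N c d / N := by
  -- below `W ^ 2 ≤ 8 s N ^ 2`, and `s ≥ 32 / ε ^ 2` turns this into `W ≤ ε s N / 2`
  obtain ⟨s, hs⟩ := exists_nat_ge (32 / ε ^ 2)
  have hsR : (0 : ℝ) < s := lt_of_lt_of_le (by positivity) hs
  have hεs : 32 ≤ ε ^ 2 * s := by rwa [div_le_iff₀ (by positivity), mul_comm] at hs
  filter_upwards [hppc.eventually_sum_pairCount_le (s := s) (by exact_mod_cast hsR),
    eventually_gt_atTop 0,
    tendsto_natCast_atTop_atTop.eventually_ge_atTop ((s : ℝ) ^ 2 + 2 * (s + 1) / ε)]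
    with N hR hN hNbig
  have hNR : (0 : ℝ) < N := by exact_mod_cast hN
  have hN2 : 2 * (s + 1) / ε ≤ N := by linarith [sq_nonneg (s : ℝ)]
  have hNs : (s : ℝ) ^ 2 ≤ N := by linarith [show 0 ≤ 2 * ((s : ℝ) + 1) / ε by positivity]
  set W := windowDiscrepancy x N s
  have hW2 : W ^ 2 ≤ (ε * s * N / 2) ^ 2 := by
    have hs1 : (1 : ℝ) ≤ s := by exact_mod_cast hsR
    have hsN : (s : ℝ) ≤ N := by nlinarith
    calc W ^ 2 ≤ (N + s - 1) * (s * N + ∑ t ∈ Icc 1 s, (pairCount x N t : ℝ) - s ^ 2 * N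
          + s ^ 2 * (s - 1)) := windowDiscrepancy_sq_le hx hN s
      _ ≤ (N + s - 1) * (4 * s * N) := by
          refine mul_le_mul_of_nonneg_left ?_ (by linarith)
          nlinarith [mul_le_mul_of_nonneg_left hNs hsR.le]
      _ ≤ (2 * N) * (4 * s * N) := mul_le_mul_of_nonneg_right (by linarith) (by positivity)
      _ ≤ (ε * s * N / 2) ^ 2 := by nlinarith
  have hW : W ≤ ε * s * N / 2 :=
    (pow_le_pow_iff_left₀ (sum_nonneg fun _ _ => abs_nonneg _) (by positivity) two_ne_zero).1 hW2
  have hlow := le_countIn_add_windowDiscrepancy (x := x) hN (by exact_mod_cast hsR) hc hd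
  have hsε : (s : ℝ) + 1 ≤ ε * N / 2 := by rw [div_le_iff₀ hε] at hN2; linarith
  have hscaled : (s : ℝ) * ((d - c - ε) * N) ≤ s * countIn x N c d := by
    linarith [mul_le_mul_of_nonneg_left hsε hsR.le]
  rw [le_div_iff₀ hNR]
  exact le_of_mul_le_mul_left hscaled hsR

end Sequence

/-- (Aistleitner–Lachmann–Pausinger, Grepstad–Larcher)
If a sequence in [0,1) has Poissonian pair correlation (for every s > 0),
then it is uniformly distributed in [0,1). -/
theorem stmt5 (x : ℕ → ℝ) (hx : ∀ n, x n ∈ Set.Ico (0 : ℝ) 1)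
    (hppc : ∀ s : ℝ, 0 < s →
      Tendsto (fun N : ℕ =>
        (((Finset.Icc 1 N ×ˢ Finset.Icc 1 N).filter
          (fun p => p.1 ≠ p.2 ∧ nint (x p.1 - x p.2) ≤ s / N)).card : ℝ) / N)
        atTop (nhds (2 * s)))
    (a b : ℝ) (ha : 0 ≤ a) (hab : a < b) (hb : b ≤ 1) :
    Tendsto (fun N : ℕ =>
      (((Finset.Icc 1 N).filter (fun n => a ≤ x n ∧ x n < b)).card : ℝ) / N)
      atTop (nhds (b - a)) := by
  have hppc : HasPoissonPairCorrelation x := hppc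
  refine Metric.tendsto_nhds.2 fun ε hε => ?_
  have hε3 : 0 < ε / 3 := by positivity
  filter_upwards [hppc.eventually_sub_le_countIn_div hx ha hb hε3,
    hppc.eventually_sub_le_countIn_div hx le_rfl (hab.le.trans hb) hε3,
    hppc.eventually_sub_le_countIn_div hx (ha.trans hab.le) le_rfl hε3,
    eventually_gt_atTop 0] with N hmid hleft hright hN
  have hsplit : countIn x N 0 a + countIn x N a b + countIn x N b 1 = N := by
    rw [countIn_add_countIn N ha hab.le, countIn_add_countIn N (ha.trans hab.le) hb,
      countIn_zero_one hx N]
  have hsplit' : (countIn x N 0 a : ℝ) / N + countIn x N a b / N + countIn x N b 1 / N = 1 := by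
    rw [← add_div, ← add_div, div_eq_one_iff_eq (by positivity)]
    exact_mod_cast hsplit
  change |(countIn x N a b : ℝ) / N - (b - a)| < ε
  rw [abs_sub_lt_iff]
  constructor <;> linarith
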